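/- arXiv:1011.2196 — 4 statements merged into one kernel-verified Lean document; each statement's English description precedes it below -/
import Mathlib

section
/- With Q = [V_{N₁}(1, ω_{N₁}, …, ω_{N₁}^{M₁−1})]ᵀ where ω_{N₁} = exp(−2πi/N₁), and H(t) = V_{N₁}(ω^{t−1}, ω^{N₁+t−1}, …, ω^{(M₁−1)N₁+t−1}) for t = 1, …, N₁ where ω = exp(−2πi/N₁²), the matrix à = (Q ⊗ I_{N₁}) · diag(H(1),…,H(N₁)) equals, up to a permutation of columns, the M₁N₁×M₁N₁ Vandermonde matrix on the distinct nodes {ω^{mN₁+t} : 0 ≤ m ≤ M₁−1, 0 ≤ t ≤ N₁−1}; in particular à is invertible. -/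
open Matrix Kronecker

/-- `vand n m a` is the `n × m` Vandermonde matrix whose `j`-th column is
`(1, a j, (a j)^2, …, (a j)^(n-1))ᵀ`. -/
noncomputable def vand (n m : ℕ) (a : Fin m → ℂ) : Matrix (Fin n) (Fin m) ℂ :=
  Matrix.of fun i j => a j ^ (i : ℕ)

/-- Block diagonal matrix `diag (H 1, …, H L)`. -/
noncomputable def bdiag {L n m : ℕ} (H : Fin L → Matrix (Fin n) (Fin m) ℂ) :
    Matrix (Fin L × Fin n) (Fin m × Fin L) ℂ :=
  Matrix.of fun p q => if p.1 = q.2 then H p.1 p.2 q.1 else 0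

/-!
With `ωN = ω ^ N₁` and `ω ^ N₁² = 1`, the entry of `(Q ⊗ I) · diag (H t)` at row `(m, t)` and
column `(m', t')` is `ω ^ ((m' N₁ + t') (m N₁ + t))`. So the matrix is the transposed Vandermonde
matrix on the nodes `ω ^ k`, `k < M₁ N₁`, reindexed by `(m, t) ↦ m N₁ + t`. Since
`M₁ N₁ ≤ N₁²` and `ω` is a primitive `N₁²`-th root of unity, these nodes are distinct.
-/

namespace Complex

open Real

theorem isPrimitiveRoot_exp_neg (n : ℕ) (h0 : n ≠ 0) :
    IsPrimitiveRoot (exp (-2 * π * I / n)) n := by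
  have h : exp (-2 * π * I / n) = (exp (2 * π * I / n))⁻¹ := by
    rw [← exp_neg]
    ring_nf
  exact h ▸ (isPrimitiveRoot_exp n h0).inv

theorem exp_neg_two_pi_I_div_pow_self (n : ℕ) : exp (-2 * π * I / n) ^ n = 1 := by
  rcases eq_or_ne n 0 with rfl | h0
  · exact pow_zero _
  · exact (isPrimitiveRoot_exp_neg n h0).pow_eq_one

theorem exp_neg_two_pi_I_div_sq_pow (n : ℕ) :
    exp (-2 * π * I / (n ^ 2 : ℕ)) ^ n = exp (-2 * π * I / n) := by
  rw [← exp_nat_mul]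
  rcases eq_or_ne n 0 with rfl | h0
  · simp
  · congr 1
    push_cast
    field_simp

theorem injective_exp_neg_two_pi_I_div_pow {n k : ℕ} (h : n ≤ k) :
    Function.Injective fun i : Fin n => exp (-2 * π * I / k) ^ (i : ℕ) := by
  rcases eq_or_ne k 0 with rfl | h0
  · exact fun i => (Nat.not_lt_zero _ (i.2.trans_le h)).elim
  · exact fun i j hij =>
      Fin.ext ((isPrimitiveRoot_exp_neg k h0).pow_inj (i.2.trans_le h) (j.2.trans_le h) hij)

end Complex

theorem kronecker_one_mul_bdiag_apply {M L n m : ℕ} (Q : Matrix (Fin M) (Fin L) ℂ)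
    (H : Fin L → Matrix (Fin n) (Fin m) ℂ) (p : Fin M × Fin n) (q : Fin m × Fin L) :
    ((Q ⊗ₖ (1 : Matrix (Fin n) (Fin n) ℂ)) * bdiag H) p q = Q p.1 q.2 * H q.2 p.2 q.1 := by
  simp [mul_apply, Fintype.sum_prod_type, bdiag, one_apply]

theorem kronecker_vand_mul_bdiag_vand_eq_submatrix_vandermonde {M N : ℕ} {ω : ℂ} (hω : ω ^ (N ^ 2) = 1) :
    ((vand N M fun j => (ω ^ N) ^ (j : ℕ))ᵀ ⊗ₖ (1 : Matrix (Fin N) (Fin N) ℂ)) *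
        bdiag (fun t : Fin N => vand N M fun m => ω ^ ((m : ℕ) * N + (t : ℕ))) =
      ((vandermonde fun k : Fin (M * N) => ω ^ (k : ℕ))ᵀ).submatrix
        finProdFinEquiv finProdFinEquiv := by
  ext p q
  rw [kronecker_one_mul_bdiag_apply]
  simp only [vand, transpose_apply, of_apply, submatrix_apply,
    vandermonde_apply, finProdFinEquiv_apply_val, ← pow_mul, ← pow_add]
  -- the exponents differ by a multiple of `N ^ 2`
  rw [show ((q.2 : ℕ) + N * q.1) * (p.2 + N * p.1)
      = N * p.1 * q.2 + (q.1 * N + q.2) * p.2 + N ^ 2 * (q.1 * p.1) by ring,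
    pow_add _ _ (N ^ 2 * _), pow_mul, hω, one_pow, mul_one]

theorem stmt_4_general (M₁ N₁ : ℕ) (h2 : M₁ ≤ N₁) :
    let ω : ℂ := Complex.exp (-2 * Real.pi * Complex.I / (N₁ ^ 2 : ℕ))
    let ωN : ℂ := Complex.exp (-2 * Real.pi * Complex.I / N₁)
    let Q : Matrix (Fin M₁) (Fin N₁) ℂ := (vand N₁ M₁ fun j => ωN ^ (j : ℕ))ᵀ
    let H : Fin N₁ → Matrix (Fin N₁) (Fin M₁) ℂ :=
      fun t => vand N₁ M₁ fun m => ω ^ ((m : ℕ) * N₁ + (t : ℕ))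
    let A := (Q ⊗ₖ (1 : Matrix (Fin N₁) (Fin N₁) ℂ)) * bdiag H
    (∃ (e : (Fin M₁ × Fin N₁) ≃ Fin (M₁ * N₁)) (f : (Fin M₁ × Fin N₁) ≃ Fin (M₁ * N₁)),
      ∀ p q, A p q = (ω ^ (((f q : ℕ) / N₁) * N₁ + (f q : ℕ) % N₁)) ^ (e p : ℕ)) ∧
    IsUnit A := by
  intro ω ωN Q H A
  have hωN : ωN = ω ^ N₁ := (Complex.exp_neg_two_pi_I_div_sq_pow N₁).symm
  have hA : A = ((vandermonde fun k : Fin (M₁ * N₁) => ω ^ (k : ℕ))ᵀ).submatrix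
      finProdFinEquiv finProdFinEquiv := by
    simp only [A, Q, H, hωN]
    exact kronecker_vand_mul_bdiag_vand_eq_submatrix_vandermonde (Complex.exp_neg_two_pi_I_div_pow_self _)
  have hinj : Function.Injective fun k : Fin (M₁ * N₁) => ω ^ (k : ℕ) :=
    Complex.injective_exp_neg_two_pi_I_div_pow (sq N₁ ▸ Nat.mul_le_mul_right N₁ h2)
  refine ⟨⟨finProdFinEquiv, finProdFinEquiv, fun p q => ?_⟩, ?_⟩
  · rw [Nat.div_add_mod', hA]
    rfl
  · rw [hA, isUnit_submatrix_equiv, isUnit_transpose, isUnit_iff_isUnit_det]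
    exact (det_vandermonde_ne_zero_iff.mpr hinj).isUnit

theorem stmt_4 (M₁ N₁ : ℕ) (h1 : 1 ≤ M₁) (h2 : M₁ ≤ N₁) :
    let ω : ℂ := Complex.exp (-2 * Real.pi * Complex.I / (N₁ ^ 2 : ℕ))
    let ωN : ℂ := Complex.exp (-2 * Real.pi * Complex.I / N₁)
    let Q : Matrix (Fin M₁) (Fin N₁) ℂ := (vand N₁ M₁ fun j => ωN ^ (j : ℕ))ᵀ
    let H : Fin N₁ → Matrix (Fin N₁) (Fin M₁) ℂ :=
      fun t => vand N₁ M₁ fun m => ω ^ ((m : ℕ) * N₁ + (t : ℕ))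
    let A := (Q ⊗ₖ (1 : Matrix (Fin N₁) (Fin N₁) ℂ)) * bdiag H
    (∃ (e : (Fin M₁ × Fin N₁) ≃ Fin (M₁ * N₁)) (f : (Fin M₁ × Fin N₁) ≃ Fin (M₁ * N₁)),
      ∀ p q, A p q = (ω ^ (((f q : ℕ) / N₁) * N₁ + (f q : ℕ) % N₁)) ^ (e p : ℕ)) ∧
    IsUnit A :=
  stmt_4_general M₁ N₁ h2
end

section
/- Cyclic antenna-mode switching full-rank lemma: let N₁ ≥ M₁ ≥ 1, let h₁,…,h_{N₁} ∈ ℂ^{N₁} and Ĥ = [h₁ ⋯ h_{N₁}]. Define H(t) = [h_t, h_{t+1}, …, h_{t+M₁−1}] (indices mod N₁) for t = 1,…,N₁, let ω = exp(−2πi/N₁), Q = [V_{N₁}(1,ω,…,ω^{M₁−1})]ᵀ, and à = (Q ⊗ I_{N₁})·diag(H(1),…,H(N₁)). If Ĥ is invertible, then à is invertible. -/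
open Matrix Kronecker

/-! Because `ω ^ N₁ = 1`, the entry `ω^(a t) h_{t+j}(i)` of `Ã` at row `(a, i)` and
column `(j, t)` equals `h_{t+j}(i) · ω^(a (t+j)) · ω^(-a j)`. After the column shear
`(j, t) ↦ (j, t + j)`, `Ã` therefore factors as `(I ⊗ Ĥ) · diag (ω^(a s)) · (V ⊗ I)`,
where `V` is the transposed Vandermonde matrix of the nodes `ω^(-j)`, `j < M₁ ≤ N₁`,
which are distinct since `ω` is a primitive `N₁`-th root of unity. All three factors are
invertible. -/

theorem isUnit_vandermonde_pow_transpose {K : Type*} [Field K] {M N : ℕ} {ζ : K}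
    (hζ : IsPrimitiveRoot ζ N) (hMN : M ≤ N) :
    IsUnit (vandermonde fun j : Fin M => ζ ^ (j : ℕ))ᵀ := by
  rw [isUnit_iff_isUnit_det, det_transpose, isUnit_iff_ne_zero, det_vandermonde_ne_zero_iff]
  exact fun i j hij => Fin.ext <| hζ.pow_inj (i.2.trans_le hMN) (j.2.trans_le hMN) hij

theorem one_kronecker_mul_diagonal_mul_kronecker_one_apply {R m n : Type*} [CommSemiring R]
    [Fintype m] [Fintype n] [DecidableEq m] [DecidableEq n] (A : Matrix n n R) (d : m × n → R)
    (C : Matrix m m R) (a j : m) (i s : n) :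
    ((1 ⊗ₖ A) * diagonal d * (C ⊗ₖ 1) : Matrix (m × n) (m × n) R) (a, i) (j, s) =
      A i s * d (a, s) * C a j := by
  rw [mul_apply]
  simp [mul_diagonal, Fintype.sum_prod_type, one_apply]

def cyclicShear {M N : ℕ} [NeZero N] (hMN : M ≤ N) : Equiv.Perm (Fin M × Fin N) :=
  Equiv.prodShear (Equiv.refl _) fun j => Equiv.addRight (Fin.castLE hMN j)

theorem kronecker_one_mul_bdiag_apply_s7 {L M N : ℕ} (Q : Matrix (Fin M) (Fin L) ℂ)
    (H : Fin L → Matrix (Fin N) (Fin M) ℂ) (a j : Fin M) (i : Fin N) (t : Fin L) :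
    ((Q ⊗ₖ (1 : Matrix (Fin N) (Fin N) ℂ)) * bdiag H) (a, i) (j, t) = Q a t * H t i j := by
  simp [mul_apply, Fintype.sum_prod_type, one_apply, bdiag]

theorem kronecker_mul_bdiag_eq_submatrix {M N : ℕ} [NeZero N] (hMN : M ≤ N) {ω : ℂ}
    (hω : IsPrimitiveRoot ω N) (h : Fin N → Fin N → ℂ) :
    (vand N M fun j => ω ^ (j : ℕ))ᵀ ⊗ₖ (1 : Matrix (Fin N) (Fin N) ℂ) *
        bdiag (fun t => of fun i j => h (t + Fin.castLE hMN j) i) =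
      ((1 ⊗ₖ of fun i j => h j i) *
          diagonal (fun p : Fin M × Fin N => ω ^ ((p.1 : ℕ) * p.2)) *
        ((vandermonde fun j : Fin M => ω⁻¹ ^ (j : ℕ))ᵀ ⊗ₖ 1)).submatrix
        (Equiv.refl _) (cyclicShear hMN) := by
  ext ⟨a, i⟩ ⟨j, t⟩
  simp only [kronecker_one_mul_bdiag_apply_s7, submatrix_apply, Equiv.refl_apply, cyclicShear,
    Equiv.prodShear_apply, one_kronecker_mul_diagonal_mul_kronecker_one_apply]
  have hω0 : ω ≠ 0 := hω.ne_zero (NeZero.ne N)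
  have hshift : ω ^ ((t + Fin.castLE hMN j : Fin N) : ℕ) = ω ^ (t : ℕ) * ω ^ (j : ℕ) := by
    rw [Fin.val_add, ← pow_eq_pow_mod _ hω.pow_eq_one, Fin.val_castLE, pow_add]
  simp only [vand, vandermonde, transpose_apply, of_apply, Equiv.coe_addRight]
  rw [pow_mul' ω (a : ℕ), hshift, mul_assoc, ← mul_pow, mul_assoc, inv_pow,
    mul_inv_cancel₀ (pow_ne_zero _ hω0), mul_one]
  ring

theorem stmt_7 (M₁ N₁ : ℕ) (h1 : 1 ≤ M₁) (h2 : M₁ ≤ N₁)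
    (h : Fin N₁ → Fin N₁ → ℂ) :
    let ω : ℂ := Complex.exp (-2 * Real.pi * Complex.I / N₁)
    -- `h j` is the column vector `h_j`; `Hhat = [h₁ ⋯ h_{N₁}]`
    let Hhat : Matrix (Fin N₁) (Fin N₁) ℂ := Matrix.of fun i j => h j i
    let Q : Matrix (Fin M₁) (Fin N₁) ℂ := (vand N₁ M₁ fun j => ω ^ (j : ℕ))ᵀ
    -- cyclic antenna-mode switching: `H t = [h_t, h_{t+1}, …, h_{t+M₁-1}]` (indices mod N₁)
    let H : Fin N₁ → Matrix (Fin N₁) (Fin M₁) ℂ :=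
      fun t => Matrix.of fun i j => h (t + Fin.castLE h2 j) i
    IsUnit Hhat → IsUnit ((Q ⊗ₖ (1 : Matrix (Fin N₁) (Fin N₁) ℂ)) * bdiag H) := by
  intro ω Hhat Q H hHhat
  have : NeZero N₁ := ⟨by omega⟩
  have hω : IsPrimitiveRoot ω N₁ := by
    simpa [ω, neg_mul, neg_div, Complex.exp_neg] using
      (Complex.isPrimitiveRoot_exp N₁ (NeZero.ne N₁)).inv
  rw [kronecker_mul_bdiag_eq_submatrix h2 hω h, isUnit_submatrix_equiv]
  refine ((Matrix.IsUnit.kronecker isUnit_one hHhat).mul ?_).mul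
    (Matrix.IsUnit.kronecker (isUnit_vandermonde_pow_transpose hω.inv h2) isUnit_one)
  exact isUnit_diagonal.mpr (Pi.isUnit_iff.mpr fun _ => (hω.isUnit (NeZero.ne N₁)).pow _)
end

section
/- The block matrix R with (m, k) block ω^{−k m} G^m (for 0 ≤ m ≤ M₁−1 block rows of size N₁, 0 ≤ k ≤ M₁−1 block columns of size N₁), where G = diag(1, ω, …, ω^{N₁−1}) and ω = exp(−2πi/N₁), is invertible. Indeed, up to row and column permutations R is block diagonal with the i-th diagonal block equal to the Vandermonde matrix V_{M₁}(ω^{i}, ω^{i−1}, …, ω^{i−M₁+1}), which is invertible since ω^{i}, ω^{i−1}, …, ω^{i−M₁+1} are pairwise distinct when M₁ ≤ N₁. -/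
/-!
The `(m, j), (k, j')` entry of `R` vanishes unless `j = j'`, and for `j = j'` it equals
`(ω ^ j * ω⁻¹ ^ k) ^ m`. Grouping rows and columns by `j` therefore makes `R` block diagonal
with transposed Vandermonde blocks on the nodes `ω ^ j * ω⁻¹ ^ k`, `k < M₁`. These nodes are
pairwise distinct because `ω` is a primitive `N₁`-th root of unity and `M₁ ≤ N₁`.
-/

open Matrix

section BlockVandermonde

variable {K n : Type*} [Field K] [Fintype n] [DecidableEq n] {M : ℕ}

theorem of_inv_pow_mul_diagonal_pow_eq_blockDiagonal (d : n → K) (ω : K) :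
    (of fun p q : Fin M × n => (ω ^ ((q.1 : ℕ) * (p.1 : ℕ)))⁻¹ * (diagonal d ^ (p.1 : ℕ)) p.2 q.2) =
      blockDiagonal fun j => (vandermonde fun k : Fin M => d j * (ω ^ (k : ℕ))⁻¹)ᵀ := by
  ext ⟨m, j⟩ ⟨k, j'⟩
  by_cases h : j = j'
  · subst h
    simp only [of_apply, diagonal_pow, diagonal_apply_eq, blockDiagonal_apply_eq, transpose_apply,
      vandermonde_apply, Pi.pow_apply, mul_pow, inv_pow, ← pow_mul]
    ring
  · simp [diagonal_pow, diagonal_apply_ne _ h, blockDiagonal_apply_ne _ _ _ h]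

theorem isUnit_of_inv_pow_mul_diagonal_pow {d : n → K} {ω : K} (hd : ∀ j, d j ≠ 0)
    (hω : Function.Injective fun k : Fin M => ω ^ (k : ℕ)) :
    IsUnit (of fun p q : Fin M × n =>
      (ω ^ ((q.1 : ℕ) * (p.1 : ℕ)))⁻¹ * (diagonal d ^ (p.1 : ℕ)) p.2 q.2) := by
  rw [of_inv_pow_mul_diagonal_pow_eq_blockDiagonal, isUnit_iff_isUnit_det, det_blockDiagonal,
    isUnit_iff_ne_zero, Finset.prod_ne_zero_iff]
  intro j _
  rw [det_transpose, det_vandermonde_ne_zero_iff]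
  exact (mul_right_injective₀ (hd j)).comp (inv_injective.comp hω)

end BlockVandermonde

theorem IsPrimitiveRoot.injective_pow_fin {M N : ℕ} {K : Type*} [CommMonoid K] {ω : K}
    (hω : IsPrimitiveRoot ω N) (hMN : M ≤ N) : Function.Injective fun k : Fin M => ω ^ (k : ℕ) :=
  fun _ _ h => Fin.ext (hω.pow_inj (by omega) (by omega) h)

theorem Complex.isPrimitiveRoot_exp_neg_s8 {n : ℕ} (hn : n ≠ 0) :
    IsPrimitiveRoot (exp (-2 * Real.pi * I / n)) n := by
  rw [show -2 * Real.pi * I / n = -(2 * Real.pi * I / n) by ring, exp_neg]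
  exact (isPrimitiveRoot_exp n hn).inv

theorem stmt_8_general (M₁ N₁ : ℕ) (h2 : M₁ ≤ N₁) :
    let ω : ℂ := Complex.exp (-2 * Real.pi * Complex.I / N₁)
    let G : Matrix (Fin N₁) (Fin N₁) ℂ := Matrix.diagonal fun j => ω ^ (j : ℕ)
    -- `R` has `(m, k)` block `ω^(-k m) • G^m`
    let R : Matrix (Fin M₁ × Fin N₁) (Fin M₁ × Fin N₁) ℂ :=
      Matrix.of fun p q => (ω ^ ((q.1 : ℕ) * (p.1 : ℕ)))⁻¹ * (G ^ (p.1 : ℕ)) p.2 q.2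
    IsUnit R := by
  intro ω G R
  have hinj : Function.Injective fun k : Fin M₁ => ω ^ (k : ℕ) := by
    rcases N₁.eq_zero_or_pos with rfl | hN
    · obtain rfl : M₁ = 0 := Nat.le_zero.mp h2
      exact Function.injective_of_subsingleton _
    · exact (Complex.isPrimitiveRoot_exp_neg_s8 hN.ne').injective_pow_fin h2
  exact isUnit_of_inv_pow_mul_diagonal_pow (fun j => pow_ne_zero _ (Complex.exp_ne_zero _)) hinj

theorem stmt_8 (M₁ N₁ : ℕ) (h1 : 1 ≤ M₁) (h2 : M₁ ≤ N₁) :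
    let ω : ℂ := Complex.exp (-2 * Real.pi * Complex.I / N₁)
    let G : Matrix (Fin N₁) (Fin N₁) ℂ := Matrix.diagonal fun j => ω ^ (j : ℕ)
    -- `R` has `(m, k)` block `ω^(-k m) • G^m`
    let R : Matrix (Fin M₁ × Fin N₁) (Fin M₁ × Fin N₁) ℂ :=
      Matrix.of fun p q => (ω ^ ((q.1 : ℕ) * (p.1 : ℕ)))⁻¹ * (G ^ (p.1 : ℕ)) p.2 q.2
    IsUnit R :=
  stmt_8_general M₁ N₁ h2
end

section
/- Zero-forcing achievability counting for ZIC with CSIT: let M₁, N₁, M₂, N₂ be positive integers. Define f(d₁,d₂) achievable if either (M₂ ≥ N₁ and d₁ ≤ min(M₁,N₁) and d₂ ≤ min(M₂−N₁+(N₁−d₁), N₂) for integer stream counts) or (M₂ < N₁ and d₂ ≤ min(M₂,N₂) and d₁ ≤ min(N₁−d₂, M₁)). Then the closure (allowing time sharing, i.e. the convex hull with ℝ₊² downward closure) of the achievable integer pairs equals the polytope {(d₁,d₂) ∈ ℝ₊²: d₁ ≤ min(M₁,N₁), d₂ ≤ min(M₂,N₂), d₁+d₂ ≤ min(max(N₁,M₂),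 N₁+N₂, M₁+M₂)}. -/
/-!
Write `A = min M₁ N₁`, `B = min M₂ N₂` and `C` for the sum bound. Every achievable pair satisfies
`d₁ ≤ A`, `d₂ ≤ B`, `d₁ + d₂ ≤ C`, and the pentagon these cut out of the quadrant is convex.
Conversely, the pentagon's two outer vertices `(A, min B (C - A))` and
`(min A (C - B), B)` are zero-forcing achievable (one user at full DoF, the other taking what the
sum bound leaves), every point of the pentagon lies below a point of the segment joining them,
and scaling each coordinate towards zero carries that segment into the convex hull of the
downward closed set of achievable points.
-/

/-- Zero-forcing achievable integer stream-count pairs for the two-user MIMO Z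
interference channel with CSIT. -/
def zfAch (M₁ N₁ M₂ N₂ d₁ d₂ : ℕ) : Prop :=
  (N₁ ≤ M₂ ∧ d₁ ≤ min M₁ N₁ ∧ d₂ ≤ min (M₂ - N₁ + (N₁ - d₁)) N₂) ∨
  (M₂ < N₁ ∧ d₂ ≤ min M₂ N₂ ∧ d₁ ≤ min (N₁ - d₂) M₁)

open Set

def pentagon (A B C : ℝ) : Set (ℝ × ℝ) :=
  {d | 0 ≤ d.1 ∧ 0 ≤ d.2 ∧ d.1 ≤ A ∧ d.2 ≤ B ∧ d.1 + d.2 ≤ C}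

theorem convex_pentagon (A B C : ℝ) : Convex ℝ (pentagon A B C) := by
  have h₁ : IsLinearMap ℝ (Prod.fst : ℝ × ℝ → ℝ) := LinearMap.fst ℝ ℝ ℝ |>.isLinear
  have h₂ : IsLinearMap ℝ (Prod.snd : ℝ × ℝ → ℝ) := LinearMap.snd ℝ ℝ ℝ |>.isLinear
  have h₃ : IsLinearMap ℝ (fun d : ℝ × ℝ => d.1 + d.2) :=
    (LinearMap.fst ℝ ℝ ℝ + LinearMap.snd ℝ ℝ ℝ).isLinear
  simp only [pentagon, ofPred_and]
  exact (convex_halfSpace_ge h₁ 0).inter <| (convex_halfSpace_ge h₂ 0).inter <|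
    (convex_halfSpace_le h₁ A).inter <| (convex_halfSpace_le h₂ B).inter <|
    convex_halfSpace_le h₃ C

theorem exists_le_mem_segment_of_mem_pentagon {A B C : ℝ} {w : ℝ × ℝ}
    (hw : w ∈ pentagon A B C) :
    ∃ z ∈ segment ℝ (min A (C - B), B) (A, min B (C - A)), w ≤ z := by
  obtain ⟨-, -, hwA, hwB, hwC⟩ := hw
  by_cases hw₁ : w.1 ≤ min A (C - B)
  · exact ⟨_, left_mem_segment ℝ _ _, hw₁, hwB⟩
  · have hCB : C - B < w.1 := (min_lt_iff.1 (not_le.1 hw₁)).resolve_left hwA.not_gt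
    rw [min_eq_right (by linarith), min_eq_right (by linarith)]
    obtain ⟨s, t, hs, ht, hst, hz⟩ := Icc_subset_segment (𝕜 := ℝ) ⟨hCB.le, hwA⟩
    refine ⟨(w.1, C - w.1), ⟨s, t, hs, ht, hst, ?_⟩, le_rfl, by linarith⟩
    simp only [smul_eq_mul] at hz
    ext <;> simp only [Prod.smul_mk, Prod.mk_add_mk, smul_eq_mul]
    · exact hz
    · linear_combination C * hst - hz

theorem exists_mul_eq_of_nonneg_of_le {𝕜 : Type*} [Field 𝕜] [LinearOrder 𝕜]
    [IsStrictOrderedRing 𝕜] {x z : 𝕜} (hx : 0 ≤ x) (hxz : x ≤ z) :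
    ∃ t ∈ Icc (0 : 𝕜) 1, t * z = x := by
  obtain ⟨s, t, hs, ht, hst, h⟩ := Icc_subset_segment (𝕜 := 𝕜) ⟨hx, hxz⟩
  exact ⟨t, ⟨ht, by linarith⟩, by simpa using h⟩

theorem mem_convexHull_of_le_mem_segment {s : Set (ℝ × ℝ)}
    (hs : ∀ ⦃x y : ℝ × ℝ⦄, 0 ≤ x → x ≤ y → y ∈ s → x ∈ s)
    {u v z w : ℝ × ℝ} (hu : u ∈ s) (hv : v ∈ s) (hu₀ : 0 ≤ u) (hv₀ : 0 ≤ v)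
    (hz : z ∈ segment ℝ u v) (hw₀ : 0 ≤ w) (hwz : w ≤ z) : w ∈ convexHull ℝ s := by
  obtain ⟨t₁, ⟨ht₁₀, ht₁₁⟩, hw₁⟩ := exists_mul_eq_of_nonneg_of_le hw₀.1 hwz.1
  obtain ⟨t₂, ⟨ht₂₀, ht₂₁⟩, hw₂⟩ := exists_mul_eq_of_nonneg_of_le hw₀.2 hwz.2
  -- the coordinatewise contraction `L` maps `z` to `w` and, `s` being lower-closed, `s` into `s`
  let L : ℝ × ℝ →ₗ[ℝ] ℝ × ℝ := (LinearMap.lsmul ℝ ℝ t₁).prodMap (LinearMap.lsmul ℝ ℝ t₂)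
  have hLz : L z = w := Prod.ext hw₁ hw₂
  have hLs : ∀ x ∈ s, 0 ≤ x → L x ∈ s := fun x hx hx₀ =>
    hs ⟨mul_nonneg ht₁₀ hx₀.1, mul_nonneg ht₂₀ hx₀.2⟩
      ⟨mul_le_of_le_one_left hx₀.1 ht₁₁, mul_le_of_le_one_left hx₀.2 ht₂₁⟩ hx
  rw [← hLz]
  refine segment_subset_convexHull (hLs u hu hu₀) (hLs v hv hv₀) ?_
  have := mem_image_of_mem L.toAffineMap hz
  rwa [image_segment] at this

theorem pentagon_subset_convexHull {s : Set (ℝ × ℝ)}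
    (hs : ∀ ⦃x y : ℝ × ℝ⦄, 0 ≤ x → x ≤ y → y ∈ s → x ∈ s) {A B C : ℝ}
    (hA : 0 ≤ A) (hB : 0 ≤ B) (hAC : A ≤ C) (hBC : B ≤ C)
    (hu : (min A (C - B), B) ∈ s) (hv : (A, min B (C - A)) ∈ s) :
    pentagon A B C ⊆ convexHull ℝ s := fun _ hw =>
  let ⟨_, hz, hwz⟩ := exists_le_mem_segment_of_mem_pentagon hw
  mem_convexHull_of_le_mem_segment hs hu hv ⟨le_min hA (sub_nonneg.2 hBC), hB⟩
    ⟨hA, le_min hB (sub_nonneg.2 hAC)⟩ hz ⟨hw.1, hw.2.1⟩ hwz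

def timeSharingRegion (p : ℕ → ℕ → Prop) : Set (ℝ × ℝ) :=
  convexHull ℝ {x | 0 ≤ x.1 ∧ 0 ≤ x.2 ∧ ∃ d₁ d₂ : ℕ, p d₁ d₂ ∧ x.1 ≤ d₁ ∧ x.2 ≤ d₂}

theorem timeSharingRegion_eq_pentagon {p : ℕ → ℕ → Prop} {A B C : ℕ}
    (hp : ∀ d₁ d₂, p d₁ d₂ → d₁ ≤ A ∧ d₂ ≤ B ∧ d₁ + d₂ ≤ C)
    (hu : p (min A (C - B)) B) (hv : p A (min B (C - A))) :
    timeSharingRegion p = pentagon A B C := by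
  have hBC : B ≤ C := by have := hp _ _ hu; omega
  have hAC : A ≤ C := by have := hp _ _ hv; omega
  set T := {x : ℝ × ℝ | 0 ≤ x.1 ∧ 0 ≤ x.2 ∧ ∃ d₁ d₂ : ℕ, p d₁ d₂ ∧ x.1 ≤ d₁ ∧ x.2 ≤ d₂}
  have hT : ∀ ⦃x y : ℝ × ℝ⦄, 0 ≤ x → x ≤ y → y ∈ T → x ∈ T :=
    fun _ _ hx hxy ⟨_, _, d₁, d₂, hd, h₁, h₂⟩ =>
      ⟨hx.1, hx.2, d₁, d₂, hd, hxy.1.trans h₁, hxy.2.trans h₂⟩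
  have hcast : ∀ {d₁ d₂ : ℕ}, p d₁ d₂ → ((d₁ : ℝ), (d₂ : ℝ)) ∈ T := fun hd =>
    ⟨Nat.cast_nonneg _, Nat.cast_nonneg _, _, _, hd, le_rfl, le_rfl⟩
  refine (convexHull_min ?_ (convex_pentagon _ _ _)).antisymm ?_
  · rintro x ⟨hx₁, hx₂, d₁, d₂, hd, h₁, h₂⟩
    obtain ⟨b₁, b₂, b₁₂⟩ := hp _ _ hd
    exact ⟨hx₁, hx₂, h₁.trans (by exact_mod_cast b₁), h₂.trans (by exact_mod_cast b₂),
      (add_le_add h₁ h₂).trans (by exact_mod_cast b₁₂)⟩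
  · have hu' := hcast hu
    have hv' := hcast hv
    rw [Nat.cast_min, Nat.cast_sub hBC] at hu'
    rw [Nat.cast_min, Nat.cast_sub hAC] at hv'
    exact pentagon_subset_convexHull hT (Nat.cast_nonneg _) (Nat.cast_nonneg _)
      (by exact_mod_cast hAC) (by exact_mod_cast hBC) hu' hv'

def zfSumBound (M₁ N₁ M₂ N₂ : ℕ) : ℕ := min (max N₁ M₂) (min (N₁ + N₂) (M₁ + M₂))

section
variable {M₁ N₁ M₂ N₂ : ℕ}

theorem zfAch.le {d₁ d₂ : ℕ} (h : zfAch M₁ N₁ M₂ N₂ d₁ d₂) :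
    d₁ ≤ min M₁ N₁ ∧ d₂ ≤ min M₂ N₂ ∧ d₁ + d₂ ≤ zfSumBound M₁ N₁ M₂ N₂ := by
  unfold zfAch at h; unfold zfSumBound; omega

theorem zfAch_fst_full :
    zfAch M₁ N₁ M₂ N₂ (min M₁ N₁) (min (min M₂ N₂) (zfSumBound M₁ N₁ M₂ N₂ - min M₁ N₁)) := by
  unfold zfAch zfSumBound; omega

theorem zfAch_snd_full :
    zfAch M₁ N₁ M₂ N₂ (min (min M₁ N₁) (zfSumBound M₁ N₁ M₂ N₂ - min M₂ N₂)) (min M₂ N₂) := by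
  unfold zfAch zfSumBound; omega

end

theorem stmt_19_general (M₁ N₁ M₂ N₂ : ℕ) :
    convexHull ℝ {x : ℝ × ℝ | 0 ≤ x.1 ∧ 0 ≤ x.2 ∧
        ∃ d₁ d₂ : ℕ, zfAch M₁ N₁ M₂ N₂ d₁ d₂ ∧ x.1 ≤ (d₁ : ℝ) ∧ x.2 ≤ (d₂ : ℝ)} =
      {d : ℝ × ℝ | 0 ≤ d.1 ∧ 0 ≤ d.2 ∧ d.1 ≤ min (M₁ : ℝ) N₁ ∧ d.2 ≤ min (M₂ : ℝ) N₂ ∧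
        d.1 + d.2 ≤ min (max (N₁ : ℝ) M₂) (min ((N₁ : ℝ) + N₂) ((M₁ : ℝ) + M₂))} := by
  have h := timeSharingRegion_eq_pentagon (fun _ _ hd => zfAch.le hd)
    (zfAch_snd_full (M₁ := M₁) (N₁ := N₁) (M₂ := M₂) (N₂ := N₂)) zfAch_fst_full
  simpa only [timeSharingRegion, pentagon, zfSumBound, Nat.cast_min, Nat.cast_max,
    Nat.cast_add] using h

theorem stmt_19 (M₁ N₁ M₂ N₂ : ℕ) (h1 : 0 < M₁) (h2 : 0 < N₁) (h3 : 0 < M₂)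
    (h4 : 0 < N₂) :
    convexHull ℝ {x : ℝ × ℝ | 0 ≤ x.1 ∧ 0 ≤ x.2 ∧
        ∃ d₁ d₂ : ℕ, zfAch M₁ N₁ M₂ N₂ d₁ d₂ ∧ x.1 ≤ (d₁ : ℝ) ∧ x.2 ≤ (d₂ : ℝ)} =
      {d : ℝ × ℝ | 0 ≤ d.1 ∧ 0 ≤ d.2 ∧ d.1 ≤ min (M₁ : ℝ) N₁ ∧ d.2 ≤ min (M₂ : ℝ) N₂ ∧
        d.1 + d.2 ≤ min (max (N₁ : ℝ) M₂) (min ((N₁ : ℝ) + N₂) ((M₁ : ℝ) + M₂))} :=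
  stmt_19_general M₁ N₁ M₂ N₂
end
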